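/- Let Γ be an n×n positive semidefinite complex matrix with diagonal entries satisfying 0 ≤ Γ_{ii} ≤ 1 for all i. Then for every positive semidefinite matrix M, the eigenvalue vector of Γ ∘ M is weakly majorized by the eigenvalue vector of M. -/

import Mathlib

/-!
Given a set `s` of indices of eigenvalues `μ i` of `C = Γ ⊙ M`, let `P` be the orthogonal
projection onto the corresponding eigenvectors, so that `∑ i ∈ s, μ i = tr (P C) = tr (Q M)` with
`Q = Γᵀ ⊙ P`. By the Schur product theorem `0 ≤ Q ≤ 1`, since
`1 - Q = Γᵀ ⊙ (1 - P) + diag (1 - Γ i i)`, and `tr Q ≤ tr P = #s`. In an eigenbasis of `M` this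
reads `tr (Q M) = ∑ i, λ i * q i` with `0 ≤ q i ≤ 1` and `∑ i, q i ≤ #s`, and such a sum is at
most the sum of the `#s` largest eigenvalues `λ i` of `M`.
-/

open Matrix ComplexOrder

namespace Matrix.PosSemidef

/-- The positive semidefinite square root, as defined in the older Mathlib (removed since). -/
noncomputable def sqrt {n 𝕜 : Type*} [Fintype n] [DecidableEq n] [RCLike 𝕜]
    {A : Matrix n n 𝕜} (hA : A.PosSemidef) : Matrix n n 𝕜 :=
  hA.1.eigenvectorUnitary.1 * diagonal ((↑) ∘ (√·) ∘ hA.1.eigenvalues) *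
  (star hA.1.eigenvectorUnitary : Matrix n n 𝕜)

lemma posSemidef_sqrt {n 𝕜 : Type*} [Fintype n] [DecidableEq n] [RCLike 𝕜]
    {A : Matrix n n 𝕜} (hA : A.PosSemidef) : PosSemidef hA.sqrt := by
  apply PosSemidef.mul_mul_conjTranspose_same
  refine posSemidef_diagonal_iff.mpr fun i ↦ ?_
  rw [Function.comp_apply, RCLike.nonneg_iff]
  constructor
  · simp only [RCLike.ofReal_re]
    exact Real.sqrt_nonneg _
  · simp only [RCLike.ofReal_im]

end Matrix.PosSemidef

namespace Heron

variable {n : ℕ}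

def WeakMaj {n : ℕ} (x y : Fin n → ℝ) : Prop :=
  ∀ s : Finset (Fin n), ∃ t : Finset (Fin n),
    t.card = s.card ∧ ∑ i ∈ s, x i ≤ ∑ i ∈ t, y i

def Maj {n : ℕ} (x y : Fin n → ℝ) : Prop :=
  WeakMaj x y ∧ ∑ i, x i = ∑ i, y i

lemma sandwich_posSemidef {S T : Matrix (Fin n) (Fin n) ℂ} (hS : S.IsHermitian)
    (hT : T.PosSemidef) : (S * T * S).PosSemidef := by
  have h := hT.mul_mul_conjTranspose_same S
  rwa [hS.eq] at h

noncomputable def geomMean {A B : Matrix (Fin n) (Fin n) ℂ}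
    (hA : A.PosDef) (hB : B.PosDef) : Matrix (Fin n) (Fin n) ℂ :=
  hA.posSemidef.sqrt *
    (sandwich_posSemidef hA.posSemidef.posSemidef_sqrt.isHermitian.inv
        hB.posSemidef).sqrt *
    hA.posSemidef.sqrt

lemma geomMean_posSemidef {A B : Matrix (Fin n) (Fin n) ℂ}
    (hA : A.PosDef) (hB : B.PosDef) : (geomMean hA hB).PosSemidef :=
  sandwich_posSemidef hA.posSemidef.posSemidef_sqrt.isHermitian
    (Matrix.PosSemidef.posSemidef_sqrt _)

noncomputable def specMean {A B : Matrix (Fin n) (Fin n) ℂ}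
    (hA : A.PosDef) (hB : B.PosDef) : Matrix (Fin n) (Fin n) ℂ :=
  (geomMean_posSemidef hA.inv hB).sqrt * A * (geomMean_posSemidef hA.inv hB).sqrt

def HasPosSpectrum (M : Matrix (Fin n) (Fin n) ℂ) : Prop :=
  ∀ z ∈ spectrum ℂ M, 0 < z.re ∧ z.im = 0

def IsPrincipalSqrt (M S : Matrix (Fin n) (Fin n) ℂ) : Prop :=
  S * S = M ∧ HasPosSpectrum S

noncomputable def absMat (Y : Matrix (Fin n) (Fin n) ℂ) : Matrix (Fin n) (Fin n) ℂ :=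
  (Matrix.posSemidef_conjTranspose_mul_self Y).sqrt

noncomputable def posPart (H : Matrix (Fin n) (Fin n) ℂ) : Matrix (Fin n) (Fin n) ℂ :=
  ((1 : ℂ) / 2) • (absMat H + H)

end Heron

open Finset
open scoped MatrixOrder

section WeightedSum

variable {ι : Type*} [Fintype ι]

theorem exists_card_eq_and_separating_value (f : ι → ℝ) {k : ℕ} (hk : k ≤ Fintype.card ι) :
    ∃ t : Finset ι, #t = k ∧ ∃ c, (∀ i ∈ t, c ≤ f i) ∧ ∀ i ∉ t, f i ≤ c := by
  classical
  obtain ⟨t, ht, hmax⟩ := (powersetCard k (univ : Finset ι)).exists_max_image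
    (fun u ↦ ∑ i ∈ u, f i) (powersetCard_nonempty.mpr (by simpa using hk))
  rw [mem_powersetCard_univ] at ht
  refine ⟨t, ht, ?_⟩
  rcases t.eq_empty_or_nonempty with rfl | hne
  · obtain ⟨c, hc⟩ := (Set.finite_range f).bddAbove
    exact ⟨c, by simp, fun i _ ↦ hc ⟨i, rfl⟩⟩
  obtain ⟨j, hj, hjmin⟩ := t.exists_min_image f hne
  refine ⟨f j, hjmin, fun i hi ↦ not_lt.mp fun hji ↦ ?_⟩
  have hswap := hmax (insert i (t.erase j)) (by
    rw [mem_powersetCard_univ, card_insert_of_notMem (fun h ↦ hi (mem_of_mem_erase h)),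
      card_erase_of_mem hj, ht]
    have := card_pos.mpr hne
    omega)
  rw [sum_insert (fun h ↦ hi (mem_of_mem_erase h)), ← add_sum_erase t f hj] at hswap
  linarith

theorem sum_mul_le_sum_of_separating_value {t : Finset ι} {f q : ι → ℝ} {c : ℝ} (hc : 0 ≤ c)
    (hmem : ∀ i ∈ t, c ≤ f i) (hnotMem : ∀ i ∉ t, f i ≤ c)
    (hq0 : ∀ i, 0 ≤ q i) (hq1 : ∀ i, q i ≤ 1) (hq : ∑ i, q i ≤ #t) :
    ∑ i, f i * q i ≤ ∑ i ∈ t, f i := by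
  classical
  have hcompl : ∑ i ∈ tᶜ, q i ≤ ∑ i ∈ t, (1 - q i) := by
    rw [sum_sub_distrib, sum_const, nsmul_one, ← sum_add_sum_compl t q] at *
    linarith
  calc ∑ i, f i * q i = ∑ i ∈ t, f i * q i + ∑ i ∈ tᶜ, f i * q i := (sum_add_sum_compl t _).symm
    _ ≤ ∑ i ∈ t, f i * q i + ∑ i ∈ tᶜ, c * q i := by
      gcongr with i hi
      · exact hq0 i
      · exact hnotMem i (mem_compl.mp hi)
    _ ≤ ∑ i ∈ t, f i * q i + ∑ i ∈ t, c * (1 - q i) := by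
      rw [← mul_sum, ← mul_sum]
      gcongr
    _ ≤ ∑ i ∈ t, f i * q i + ∑ i ∈ t, f i * (1 - q i) := by
      gcongr with i hi
      · linarith [hq1 i]
      · exact hmem i hi
    _ = ∑ i ∈ t, f i := by rw [← sum_add_distrib]; simp [mul_sub]

theorem exists_card_eq_sum_mul_le_sum {f q : ι → ℝ} (hf : ∀ i, 0 ≤ f i)
    (hq0 : ∀ i, 0 ≤ q i) (hq1 : ∀ i, q i ≤ 1) {k : ℕ} (hk : k ≤ Fintype.card ι)
    (hq : ∑ i, q i ≤ k) : ∃ t : Finset ι, #t = k ∧ ∑ i, f i * q i ≤ ∑ i ∈ t, f i := by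
  obtain ⟨t, rfl, c, hmem, hnotMem⟩ := exists_card_eq_and_separating_value f hk
  exact ⟨t, rfl, sum_mul_le_sum_of_separating_value (le_max_right c 0)
    (fun i hi ↦ max_le (hmem i hi) (hf i))
    (fun i hi ↦ (hnotMem i hi).trans (le_max_left c 0)) hq0 hq1 hq⟩

end WeightedSum

namespace Matrix

variable {ι 𝕜 : Type*} [RCLike 𝕜]

theorem PosSemidef.hadamard_le_one [DecidableEq ι] {Γ P : Matrix ι ι 𝕜} (hΓ : Γ.PosSemidef)
    (hdiag : ∀ i, Γ i i ≤ 1) (hP : P ≤ 1) : Γ ⊙ P ≤ 1 := by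
  have hsplit : 1 - Γ ⊙ P = Γ ⊙ (1 - P) + diagonal (1 - Γ.diag) := by
    ext i j
    by_cases hij : i = j <;> simp [hadamard_apply, mul_sub, hij]
  rw [le_iff, hsplit]
  exact (hΓ.hadamard hP).add (PosSemidef.diagonal fun i ↦ sub_nonneg.mpr (hdiag i))

variable [Fintype ι]

theorem trace_mul_hadamard {R : Type*} [CommSemiring R] (A B C : Matrix ι ι R) :
    (A * (B ⊙ C)).trace = ((Bᵀ ⊙ A) * C).trace := by
  simp only [trace, Matrix.diag, mul_apply, hadamard_apply, transpose_apply]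
  exact sum_congr rfl fun _ _ ↦ sum_congr rfl fun _ _ ↦ by ring

theorem trace_hadamard_le_trace {Γ P : Matrix ι ι 𝕜} (hdiag : ∀ i, Γ i i ≤ 1)
    (hP : P.PosSemidef) : (Γ ⊙ P).trace ≤ P.trace :=
  sum_le_sum fun i _ ↦ mul_le_of_le_one_left hP.diag_nonneg (hdiag i)

variable [DecidableEq ι]

namespace IsHermitian

variable {A : Matrix ι ι 𝕜} (hA : A.IsHermitian)

theorem trace_mul_eq_sum_eigenvalues (B : Matrix ι ι 𝕜) :
    (B * A).trace = ∑ i, (star (hA.eigenvectorUnitary : Matrix ι ι 𝕜) * B *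
      hA.eigenvectorUnitary) i i * hA.eigenvalues i := by
  conv_lhs => rw [hA.spectral_theorem, Unitary.conjStarAlgAut_apply, ← mul_assoc,
    trace_mul_cycle, ← mul_assoc]
  simp [trace, mul_diagonal]

noncomputable def eigenvectorProj (s : Finset ι) : Matrix ι ι 𝕜 :=
  Unitary.conjStarAlgAut 𝕜 _ hA.eigenvectorUnitary (diagonal fun i ↦ if i ∈ s then 1 else 0)

theorem trace_eigenvectorProj (s : Finset ι) : (hA.eigenvectorProj s).trace = #s := by
  rw [eigenvectorProj, Unitary.conjStarAlgAut_apply, trace_mul_cycle, Unitary.coe_star_mul_self,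
    one_mul]
  simp [trace_diagonal]

theorem trace_eigenvectorProj_mul (s : Finset ι) :
    (hA.eigenvectorProj s * A).trace = ∑ i ∈ s, (hA.eigenvalues i : 𝕜) := by
  have hU : star (hA.eigenvectorUnitary : Matrix ι ι 𝕜) * hA.eigenvectorUnitary = 1 :=
    Unitary.coe_star_mul_self _
  rw [hA.trace_mul_eq_sum_eigenvalues, eigenvectorProj, Unitary.conjStarAlgAut_apply]
  simp only [← mul_assoc, hU, one_mul]
  simp only [mul_assoc, hU, mul_one]
  simp

theorem eigenvectorProj_nonneg (s : Finset ι) : 0 ≤ hA.eigenvectorProj s := by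
  refine star_right_conjugate_nonneg (PosSemidef.diagonal fun i ↦ ?_).nonneg _
  split_ifs <;> simp

theorem eigenvectorProj_le_one (s : Finset ι) : hA.eigenvectorProj s ≤ 1 := by
  have hD : (diagonal fun i ↦ if i ∈ s then 1 else 0 : Matrix ι ι 𝕜) ≤ 1 := by
    rw [le_iff, ← diagonal_one, diagonal_sub]
    exact PosSemidef.diagonal fun i ↦ by split_ifs <;> simp
  simpa [eigenvectorProj] using star_right_conjugate_le_conjugate hD hA.eigenvectorUnitary.1

end IsHermitian

theorem PosSemidef.exists_card_eq_re_trace_mul_le_sum_eigenvalues {A Q : Matrix ι ι 𝕜}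
    (hA : A.PosSemidef) (hQ0 : 0 ≤ Q) (hQ1 : Q ≤ 1) {k : ℕ} (hk : k ≤ Fintype.card ι)
    (htr : RCLike.re Q.trace ≤ k) :
    ∃ t : Finset ι, #t = k ∧ RCLike.re (Q * A).trace ≤ ∑ i ∈ t, hA.isHermitian.eigenvalues i := by
  set U : Matrix ι ι 𝕜 := hA.isHermitian.eigenvectorUnitary.1
  have hU : star U * U = 1 := Unitary.coe_star_mul_self _
  have hU' : U * star U = 1 := Unitary.coe_mul_star_self _
  set R := star U * Q * U
  have hR0 : 0 ≤ R := star_left_conjugate_nonneg hQ0 U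
  have hR1 : R ≤ 1 := by simpa [hU] using star_left_conjugate_le_conjugate hQ1 U
  have hq0 i : 0 ≤ RCLike.re (R i i) := by
    simpa using RCLike.re_le_re hR0.posSemidef.diag_nonneg
  have hq1 i : RCLike.re (R i i) ≤ 1 := by
    simpa using RCLike.re_le_re ((le_iff.mp hR1).diag_nonneg (i := i))
  have hsum : ∑ i, RCLike.re (R i i) = RCLike.re Q.trace := by
    rw [← map_sum, show ∑ i, R i i = R.trace from rfl, trace_mul_cycle, hU', one_mul]
  obtain ⟨t, ht, hle⟩ := exists_card_eq_sum_mul_le_sum hA.eigenvalues_nonneg hq0 hq1 hk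
    (hsum ▸ htr)
  refine ⟨t, ht, le_of_eq_of_le ?_ hle⟩
  rw [hA.isHermitian.trace_mul_eq_sum_eigenvalues, map_sum]
  exact sum_congr rfl fun i _ ↦ by rw [RCLike.re_mul_ofReal, mul_comm]

end Matrix

namespace Heron

/-- Schur multiplication by a positive semidefinite matrix with
diagonal entries in `[0,1]` produces a weakly majorized eigenvalue vector. -/
theorem schur_subcorrelation_weak_majorization {n : ℕ}
    (Γ M : Matrix (Fin n) (Fin n) ℂ) (hΓ : Γ.PosSemidef)
    (hdiag : ∀ i, 0 ≤ (Γ i i).re ∧ (Γ i i).re ≤ 1) (hM : M.PosSemidef)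
    (hSchur : (Matrix.hadamard Γ M).IsHermitian) :
    WeakMaj hSchur.eigenvalues hM.isHermitian.eigenvalues := by
  intro s
  set P := hSchur.eigenvectorProj s
  have hP0 := hSchur.eigenvectorProj_nonneg s
  have hΓ_le_one i : Γᵀ i i ≤ 1 := Complex.le_def.mpr
    ⟨by simpa using (hdiag i).2, by simpa using (Complex.le_def.mp hΓ.diag_nonneg).2.symm⟩
  have htrace : RCLike.re (Γᵀ ⊙ P).trace ≤ #s := by
    simpa [P, hSchur.trace_eigenvectorProj] using
      RCLike.re_le_re (trace_hadamard_le_trace hΓ_le_one hP0.posSemidef)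
  obtain ⟨t, ht, hle⟩ := hM.exists_card_eq_re_trace_mul_le_sum_eigenvalues
    (hΓ.transpose.hadamard hP0.posSemidef).nonneg
    (hΓ.transpose.hadamard_le_one hΓ_le_one (hSchur.eigenvectorProj_le_one s))
    (card_le_univ s) htrace
  refine ⟨t, ht, ?_⟩
  calc ∑ i ∈ s, hSchur.eigenvalues i = RCLike.re (P * (Γ ⊙ M)).trace := by
        simp [P, hSchur.trace_eigenvectorProj_mul]
    _ = RCLike.re ((Γᵀ ⊙ P) * M).trace := by rw [trace_mul_hadamard]
    _ ≤ ∑ i ∈ t, hM.isHermitian.eigenvalues i := hle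

end Heron
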